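/- In every finite sequential game, a strategy profile is terminal for the {I,L}-dynamics if and only if it is a Strong Nash Equilibrium in the sense of Aumann. -/

import Mathlib

namespace SeqGame

inductive GameTree (N O : Type) : Type where
  | leaf (o : O) : GameTree N O
  | node (i : N) (children : List (GameTree N O)) : GameTree N O

namespace GameTree

variable {N O : Type}

/-- The subtree of `T` at position `p` (a list of child indices), if it exists. -/
def subtree : GameTree N O → List ℕ → Option (GameTree N O)
  | t, [] => some t
  | leaf _, _ :: _ => none
  | node _ c, k :: p =>
    match getElem? c k with
    | some t => subtree t p
    | none => none

/-- A strategy profile: a choice of a child index at every position. -/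
abbrev Profile := List ℕ → ℕ

/-- A profile is legal if it chooses an existing child at every internal node. -/
def Legal (T : GameTree N O) (s : Profile) : Prop :=
  ∀ p i c, T.subtree p = some (node i c) → s p < c.length

/-- The profiles `s` and `s'` differ at the (valid, internal) node `p`. -/
def Differs (T : GameTree N O) (s s' : Profile) (p : List ℕ) : Prop :=
  (∃ i c, T.subtree p = some (node i c)) ∧ s p ≠ s' p

/-- The outcome reached when playing according to the profile `s`. -/
def outcome : GameTree N O → Profile → Option O
  | leaf o, _ => some o
  | node _ c, s =>
    match h : getElem? c (s []) with
    | some t => outcome t (fun p => s (s [] :: p))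
    | none => none
decreasing_by
  have hm : t ∈ c := by
    exact List.mem_of_getElem? h
  have := List.sizeOf_lt_of_mem hm
  simp only [node.sizeOf_spec]
  omega

/-- The profile `s` re-rooted at position `p`. -/
def shift (s : Profile) (p : List ℕ) : Profile := fun q => s (p ++ q)

/-- The owner of the node at position `p`, if it is internal. -/
def ownerAt (T : GameTree N O) (p : List ℕ) : Option N :=
  match T.subtree p with
  | some (node i _) => some i
  | _ => none

/-- `p` lies along the play induced by `s`. -/
def OnPlay (s : Profile) (p : List ℕ) : Prop :=
  ∀ q k, (q ++ [k]) <+: p → s q = k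

/-- Improvement property: every player who changes strictly improves the outcome. -/
def Iprop (T : GameTree N O) (pref : N → O → O → Prop) (s s' : Profile) : Prop :=
  ∀ p i c, T.subtree p = some (node i c) → s p ≠ s' p →
    ∃ x y, T.outcome s = some x ∧ T.outcome s' = some y ∧ pref i x y

/-- Subgame improvement property. -/
def SIprop (T : GameTree N O) (pref : N → O → O → Prop) (s s' : Profile) : Prop :=
  ∀ p i c, T.subtree p = some (node i c) → s p ≠ s' p →
    ∃ x y, outcome (node i c) (shift s p) = some x ∧
      outcome (node i c) (shift s' p) = some y ∧ pref i x y

/-- Laziness property: all changed nodes lie along the play induced by `s'`. -/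
def Lprop (T : GameTree N O) (s s' : Profile) : Prop :=
  ∀ p, Differs T s s' p → OnPlay s' p

/-- One player property: at most one player changes his strategy. -/
def P1prop (T : GameTree N O) (s s' : Profile) : Prop :=
  ∃ i : N, ∀ p, Differs T s s' p → T.ownerAt p = some i

/-- Atomicity property: at most one node changes. -/
def Aprop (T : GameTree N O) (s s' : Profile) : Prop :=
  ∀ p q, Differs T s s' p → Differs T s s' q → p = q

/-- Names of the update properties. -/
inductive Upd : Type | I | SI | L | P1 | A
deriving DecidableEq

/-- Interpretation of an update property name. -/
def holds (T : GameTree N O) (pref : N → O → O → Prop) : Upd → Profile → Profile → Prop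
  | .I => Iprop T pref
  | .SI => SIprop T pref
  | .L => Lprop T
  | .P1 => P1prop T
  | .A => Aprop T

/-- The X-dynamics: an actual update (between legal profiles) satisfying
all properties in `X`. -/
def XDyn (X : Set Upd) (T : GameTree N O) (pref : N → O → O → Prop)
    (s s' : Profile) : Prop :=
  Legal T s ∧ Legal T s' ∧ (∃ p, Differs T s s' p) ∧ ∀ u ∈ X, holds T pref u s s'

/-- A dynamics terminates iff there is no infinite update sequence. -/
def Terminates (D : Profile → Profile → Prop) : Prop :=
  ¬ ∃ f : ℕ → Profile, ∀ n, D (f n) (f (n + 1))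

/-- `s'` is a deviation from `s` by the coalition `I`. -/
def Deviation (T : GameTree N O) (I : Set N) (s s' : Profile) : Prop :=
  Legal T s' ∧ ∀ p i c, T.subtree p = some (node i c) → i ∉ I → s p = s' p

/-- Nash equilibrium. -/
def IsNE (T : GameTree N O) (pref : N → O → O → Prop) (s : Profile) : Prop :=
  ∀ i s', Deviation T {i} s s' →
    ∀ x y, T.outcome s = some x → T.outcome s' = some y → ¬ pref i x y

/-- Subgame perfect equilibrium: an NE in every subgame. -/
def IsSPE (T : GameTree N O) (pref : N → O → O → Prop) (s : Profile) : Prop :=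
  ∀ p t, T.subtree p = some t → IsNE t pref (shift s p)

/-- Strong Nash equilibrium (Aumann). -/
def IsSNE (T : GameTree N O) (pref : N → O → O → Prop) (s : Profile) : Prop :=
  ∀ I : Set N, I.Nonempty → ∀ s', Deviation T I s s' →
    ∃ i ∈ I, ∀ x y, T.outcome s = some x → T.outcome s' = some y → ¬ pref i x y

/-- A relation is acyclic if it has no cycle. -/
def Acyclic (r : O → O → Prop) : Prop := ∀ x, ¬ Relation.TransGen r x x

/-- Incomparability. -/
def Incomp (r : O → O → Prop) (x y : O) : Prop := ¬ r x y ∧ ¬ r y x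

/-- Strict weak order: irreflexive, transitive, with transitive incomparability. -/
def IsSWO (r : O → O → Prop) : Prop :=
  (∀ x, ¬ r x x) ∧ (∀ x y z, r x y → r y z → r x z) ∧
    (∀ x y z, Incomp r x y → Incomp r y z → Incomp r x z)

/-- Strict linear order: irreflexive, transitive and total. -/
def IsSLO (r : O → O → Prop) : Prop :=
  (∀ x, ¬ r x x) ∧ (∀ x y z, r x y → r y z → r x z) ∧
    (∀ x y, x ≠ y → r x y ∨ r y x)

/-- Absence of the main pattern. -/
def OutOfMainPattern (pref : N → O → O → Prop) : Prop :=
  ∀ (i j : N) (x y z : O),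
    ¬ (pref i x y ∧ pref i y z ∧ pref j y z ∧ pref j z x)

/-- Absence of the secondary pattern. -/
def OutOfSecondaryPattern (pref : N → O → O → Prop) : Prop :=
  ∀ (i j : N) (w x y z : O),
    ¬ (pref i w x ∧ pref i x y ∧ pref i y z ∧
       Incomp (pref j) x z ∧ pref j z w ∧ Incomp (pref j) w y)

/-- Absence of both patterns. -/
def OutOfPattern (pref : N → O → O → Prop) : Prop :=
  OutOfMainPattern pref ∧ OutOfSecondaryPattern pref

/-- The preferences can be layered: there is an ordered partition of the
outcomes (given by a layer-index function) such that higher layers are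
unanimously weakly preferred, and within a layer no two players agree on
one pair while disagreeing on another pair. -/
def CanBeLayered (pref : N → O → O → Prop) : Prop :=
  ∃ ℓ : O → ℕ,
    (∀ x y, ℓ x < ℓ y → ∀ i, ¬ pref i y x) ∧
    (∀ (i j : N) (w x y z : O), ℓ w = ℓ x → ℓ x = ℓ y → ℓ y = ℓ z →
      ¬ (pref i x y ∧ pref j x y ∧ pref i w z ∧ pref j z w))

/-!
The players who change in an {I,L}-update form a coalition whose members all strictly prefer the
new outcome, so a strong Nash equilibrium admits no such update (laziness is not needed here).
Conversely, if a nonempty coalition profitably deviates from `s` to `s'`, the lazy profile that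
follows `s'` along its own play and `s` elsewhere has the outcome of `s'`, changes only coalition
nodes, all on its play, and differs from `s` since the outcome changes (preferences are
irreflexive); so it is an {I,L}-update of `s`.
-/

lemma subtree_node_cons {i : N} {c : List (GameTree N O)} {k : ℕ} {t : GameTree N O}
    (h : getElem? c k = some t) (p : List ℕ) : subtree (node i c) (k :: p) = subtree t p := by
  simp only [subtree, h]

lemma outcome_leaf (o : O) (s : Profile) : outcome (leaf o : GameTree N O) s = some o := by
  rw [outcome]

lemma outcome_node_of_child {i : N} {c : List (GameTree N O)} {s : Profile}
    {t : GameTree N O} (ht : getElem? c (s []) = some t) :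
    outcome (node i c) s = outcome t (fun p => s (s [] :: p)) := by
  rw [outcome]
  split <;> simp_all

lemma outcome_node_of_no_child {i : N} {c : List (GameTree N O)} {s : Profile}
    (ht : getElem? c (s []) = none) : outcome (node i c) s = none := by
  rw [outcome]
  split <;> simp_all

lemma onPlay_nil (s : Profile) : OnPlay s [] := by
  intro q k h
  simpa using h.length_le

lemma OnPlay.of_prefix {s : Profile} {p q : List ℕ} (h : OnPlay s p) (hq : q <+: p) :
    OnPlay s q :=
  fun r k hr => h r k (hr.trans hq)

lemma onPlay_cons {s : Profile} {q : List ℕ} (hq : OnPlay (fun r => s (s [] :: r)) q) :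
    OnPlay s (s [] :: q) := by
  rintro (_ | ⟨a, r⟩) k hr
  · obtain ⟨l, hl⟩ := hr
    cases hl
    rfl
  · rw [List.cons_append, List.cons_prefix_cons] at hr
    obtain ⟨rfl, hr⟩ := hr
    exact hq r k hr

lemma outcome_congr : ∀ (T : GameTree N O) (s₁ s₂ : Profile),
    (∀ p i c, T.subtree p = some (node i c) → OnPlay s₁ p → s₁ p = s₂ p) →
    T.outcome s₁ = T.outcome s₂
  | leaf o, s₁, s₂, _ => by rw [outcome_leaf, outcome_leaf]
  | node i c, s₁, s₂, h => by
    have h₀ : s₁ [] = s₂ [] := h [] i c rfl (onPlay_nil s₁)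
    cases ht : getElem? c (s₁ []) with
    | none =>
      rw [outcome_node_of_no_child ht, outcome_node_of_no_child (h₀ ▸ ht)]
    | some t =>
      rw [outcome_node_of_child ht, outcome_node_of_child (h₀ ▸ ht), ← h₀]
      exact outcome_congr t _ _ fun p j d hp hplay =>
        h (s₁ [] :: p) j d (by rwa [subtree_node_cons ht]) (onPlay_cons hplay)
decreasing_by
  have := List.sizeOf_lt_of_mem (List.mem_of_getElem? ht)
  simp only [node.sizeOf_spec]
  omega

lemma exists_differs_of_outcome_ne {T : GameTree N O} {s s' : Profile}
    (h : T.outcome s ≠ T.outcome s') : ∃ p, Differs T s s' p := by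
  contrapose! h
  exact outcome_congr T s s' fun p i c hp _ => not_not.mp fun hne => h p ⟨⟨i, c, hp⟩, hne⟩

def changers (T : GameTree N O) (s s' : Profile) : Set N :=
  {i | ∃ p c, T.subtree p = some (node i c) ∧ s p ≠ s' p}

lemma deviation_changers {T : GameTree N O} {s s' : Profile} (h : Legal T s') :
    Deviation T (changers T s s') s s' :=
  ⟨h, fun p _ c hp hi => not_not.mp fun hne => hi ⟨p, c, hp, hne⟩⟩

lemma IsSNE.not_xDyn {T : GameTree N O} {pref : N → O → O → Prop} {s s' : Profile}
    {X : Set Upd} (hsne : IsSNE T pref s) (hX : Upd.I ∈ X) : ¬ XDyn X T pref s s' := by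
  rintro ⟨-, hs', ⟨p₀, ⟨i₀, c₀, hp₀⟩, hne₀⟩, hprops⟩
  obtain ⟨i, ⟨p, c, hp, hne⟩, hno⟩ :=
    hsne (changers T s s') ⟨i₀, p₀, c₀, hp₀, hne₀⟩ s' (deviation_changers hs')
  obtain ⟨x, y, hx, hy, hxy⟩ := (hprops Upd.I hX : Iprop T pref s s') p i c hp hne
  exact hno x y hx hy hxy

open Classical in
noncomputable def lazyUpdate (s s' : Profile) : Profile :=
  fun p => if OnPlay s' p then s' p else s p

section lazyUpdate

variable {T : GameTree N O} {s s' : Profile}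

lemma outcome_lazyUpdate : T.outcome (lazyUpdate s s') = T.outcome s' :=
  (outcome_congr T s' _ fun _ _ _ _ hp => (if_pos hp).symm).symm

lemma onPlay_lazyUpdate {p : List ℕ} (h : OnPlay s' p) : OnPlay (lazyUpdate s s') p :=
  fun q k hq => by
    rw [lazyUpdate, if_pos (h.of_prefix ((List.prefix_append q [k]).trans hq))]
    exact h q k hq

lemma legal_lazyUpdate (hs : Legal T s) (hs' : Legal T s') : Legal T (lazyUpdate s s') := by
  intro p i c hp
  unfold lazyUpdate
  split_ifs
  exacts [hs' p i c hp, hs p i c hp]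

lemma onPlay_and_ne_of_ne_lazyUpdate {p : List ℕ} (h : s p ≠ lazyUpdate s s' p) :
    OnPlay s' p ∧ s p ≠ s' p := by
  unfold lazyUpdate at h
  split_ifs at h with hp
  · exact ⟨hp, h⟩
  · exact absurd rfl h

lemma xDyn_lazyUpdate {pref : N → O → O → Prop} {I : Set N} {x y : O}
    (hirr : ∀ i x, ¬ pref i x x) (hs : Legal T s) (hdev : Deviation T I s s')
    (hI : I.Nonempty) (hx : T.outcome s = some x) (hy : T.outcome s' = some y)
    (himp : ∀ i ∈ I, pref i x y) : XDyn {Upd.I, Upd.L} T pref s (lazyUpdate s s') := by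
  have hy' : T.outcome (lazyUpdate s s') = some y := outcome_lazyUpdate.trans hy
  have hxy : x ≠ y := by
    rintro rfl
    exact hirr _ x (himp _ hI.some_mem)
  refine ⟨hs, legal_lazyUpdate hs hdev.1,
    exists_differs_of_outcome_ne (by rw [hx, hy']; simpa using hxy), ?_⟩
  simp only [Set.mem_insert_iff, Set.mem_singleton_iff, forall_eq_or_imp, forall_eq]
  constructor
  · intro p i c hp hne
    have hiI : i ∈ I := not_not.mp fun hi =>
      (onPlay_and_ne_of_ne_lazyUpdate hne).2 (hdev.2 p i c hp hi)
    exact ⟨x, y, hx, hy', himp i hiI⟩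
  · exact fun p ⟨_, hne⟩ => onPlay_lazyUpdate (onPlay_and_ne_of_ne_lazyUpdate hne).1

end lazyUpdate

lemma isSNE_of_forall_not_xDyn {T : GameTree N O} {pref : N → O → O → Prop} {s : Profile}
    (hirr : ∀ i x, ¬ pref i x x) (hs : Legal T s)
    (hterm : ∀ s', ¬ XDyn {Upd.I, Upd.L} T pref s s') : IsSNE T pref s := by
  intro I hI s' hdev
  by_contra! hno
  obtain ⟨x, y, hx, hy, -⟩ := hno _ hI.some_mem
  refine hterm _ (xDyn_lazyUpdate hirr hs hdev hI hx hy fun i hi => ?_)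
  obtain ⟨x', y', hx', hy', hxy⟩ := hno i hi
  obtain rfl : x' = x := Option.some_inj.mp (hx'.symm.trans hx)
  obtain rfl : y' = y := Option.some_inj.mp (hy'.symm.trans hy)
  exact hxy

end GameTree
end SeqGame

open SeqGame GameTree in
/-- A profile is terminal for the {I,L}-dynamics iff it is a strong Nash
equilibrium in the sense of Aumann. -/
theorem stmt_10 {N O : Type} (T : GameTree N O) (pref : N → O → O → Prop)
    (hirr : ∀ i x, ¬ pref i x x) (s : Profile) (hs : Legal T s) :
    (∀ s', ¬ XDyn {Upd.I, Upd.L} T pref s s') ↔ IsSNE T pref s :=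
  ⟨isSNE_of_forall_not_xDyn hirr hs, fun hsne _ => hsne.not_xDyn (by simp)⟩
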